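/- Input-Lipschitz bound for multi-headed attention: Let d, l, m ≥ 1 be integers, M, kappa ≥ 1, and let MHA(H) = sum_{j=1}^m A_j(H) be a multi-headed attention layer whose heads A_j have parameter matrices Q_j, K_j, V_j in R^{d×d} with all entries bounded in absolute value by kappa. Then for all H, H' in R^{d×l} with ||H||_∞ ≤ M and ||H'||_∞ ≤ M, ||MHA(H) − MHA(H')||_∞ ≤ 4·d^6·kappa^3·M^2·m·l·||H − H'||_∞. -/

import Mathlib

/-!
Everything is an entrywise estimate. For columns bounded by `M` and moving by at most `ρ`, every
entry of `Q h_i`, `K h_j`, `V h_j` is bounded by `dκM` and moves by at most `dκρ`, so the score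
`⟨Q h_i, K h_j⟩` is bounded by `d³κ²M²` and moves by at most `2d³κ²Mρ`. Since ReLU is
1-Lipschitz with `|σ(s)| ≤ |s|`, the product rule `|xy - x'y'| ≤ |x - x'||y| + |x'||y - y'|`
bounds each summand `σ(score) V h_j` by `3d⁴κ³M²ρ`; summing over the `l` tokens and `m` heads
gives `3d⁴κ³M²mlρ ≤ 4d⁶κ³M²mlρ`.
-/

open Matrix Finset Real MeasureTheory

noncomputable section

/-- The ReLU activation function. -/
def relu (t : ℝ) : ℝ := max 0 t

/-- A ReLU attention head with query, key and value matrices `Q K V`, acting on an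
embedding matrix `H ∈ ℝ^{de × l}`:  the `i`-th column of `A(H)` is
`∑ j σ(⟨Q h_i, K h_j⟩) V h_j`. -/
def attnHead {de l : ℕ} (Q K V : Matrix (Fin de) (Fin de) ℝ)
    (H : Matrix (Fin de) (Fin l) ℝ) : Matrix (Fin de) (Fin l) ℝ :=
  Matrix.of fun a i => ∑ j : Fin l,
    relu (∑ b : Fin de, Q.mulVec (fun c => H c i) b * K.mulVec (fun c => H c j) b) *
      V.mulVec (fun c => H c j) a

/-- Multi-headed attention layer with `m` heads. -/
def mha {de l : ℕ} (m : ℕ) (Q K V : ℕ → Matrix (Fin de) (Fin de) ℝ)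
    (H : Matrix (Fin de) (Fin l) ℝ) : Matrix (Fin de) (Fin l) ℝ :=
  ∑ j ∈ Finset.range m, attnHead (Q j) (K j) (V j) H

lemma abs_relu_sub_relu_le (s t : ℝ) : |relu s - relu t| ≤ |s - t| := by
  simpa only [relu, max_comm (0 : ℝ)] using abs_max_sub_max_le_abs s t 0

lemma abs_relu_le (s : ℝ) : |relu s| ≤ |s| := by
  simpa [relu] using abs_relu_sub_relu_le s 0

lemma abs_mul_sub_mul_le {x x' y y' X Y Dx Dy : ℝ} (hx' : |x'| ≤ X) (hy : |y| ≤ Y)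
    (hdx : |x - x'| ≤ Dx) (hdy : |y - y'| ≤ Dy) :
    |x * y - x' * y'| ≤ Dx * Y + X * Dy :=
  calc |x * y - x' * y'| = |(x - x') * y + x' * (y - y')| := by congr 1; ring
    _ ≤ |x - x'| * |y| + |x'| * |y - y'| := by
      rw [← abs_mul, ← abs_mul]; exact abs_add_le _ _
    _ ≤ Dx * Y + X * Dy :=
      add_le_add (mul_le_mul hdx hy (abs_nonneg _) ((abs_nonneg _).trans hdx))
        (mul_le_mul hx' hdy (abs_nonneg _) ((abs_nonneg _).trans hx'))

lemma Finset.abs_sum_le_card_mul {ι : Type*} {s : Finset ι} {f : ι → ℝ} {C : ℝ}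
    (h : ∀ i ∈ s, |f i| ≤ C) : |∑ i ∈ s, f i| ≤ #s * C :=
  (abs_sum_le_sum_abs f s).trans (by simpa using sum_le_card_nsmul s _ C h)

lemma Finset.abs_sum_sub_sum_le_card_mul {ι : Type*} {s : Finset ι} {f g : ι → ℝ} {C : ℝ}
    (h : ∀ i ∈ s, |f i - g i| ≤ C) : |∑ i ∈ s, f i - ∑ i ∈ s, g i| ≤ #s * C := by
  rw [← sum_sub_distrib]
  exact abs_sum_le_card_mul h

section EntrywiseBounds

variable {m n : Type*} [Fintype n]

lemma Matrix.abs_dotProduct_le {x y : n → ℝ} {X Y : ℝ} (hx : ∀ b, |x b| ≤ X)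
    (hy : ∀ b, |y b| ≤ Y) : |x ⬝ᵥ y| ≤ Fintype.card n * (X * Y) :=
  abs_sum_le_card_mul fun b _ => by
    rw [abs_mul]; exact mul_le_mul (hx b) (hy b) (abs_nonneg _) ((abs_nonneg _).trans (hx b))

lemma Matrix.abs_dotProduct_sub_dotProduct_le {x x' y y' : n → ℝ} {X Y Dx Dy : ℝ}
    (hx' : ∀ b, |x' b| ≤ X) (hy : ∀ b, |y b| ≤ Y)
    (hdx : ∀ b, |x b - x' b| ≤ Dx) (hdy : ∀ b, |y b - y' b| ≤ Dy) :
    |x ⬝ᵥ y - x' ⬝ᵥ y'| ≤ Fintype.card n * (Dx * Y + X * Dy) :=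
  abs_sum_sub_sum_le_card_mul fun b _ => abs_mul_sub_mul_le (hx' b) (hy b) (hdx b) (hdy b)

lemma Matrix.abs_mulVec_le {A : Matrix m n ℝ} {v : n → ℝ} {κ M : ℝ}
    (hA : ∀ a b, |A a b| ≤ κ) (hv : ∀ b, |v b| ≤ M) (a : m) :
    |(A *ᵥ v) a| ≤ Fintype.card n * (κ * M) :=
  abs_dotProduct_le (hA a) hv

lemma Matrix.abs_mulVec_sub_mulVec_le {A : Matrix m n ℝ} {v v' : n → ℝ} {κ ρ : ℝ}
    (hA : ∀ a b, |A a b| ≤ κ) (hv : ∀ b, |v b - v' b| ≤ ρ) (a : m) :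
    |(A *ᵥ v) a - (A *ᵥ v') a| ≤ Fintype.card n * (κ * ρ) := by
  rw [← Pi.sub_apply, ← mulVec_sub]
  exact abs_mulVec_le hA hv a

end EntrywiseBounds

lemma attnHead_apply {d l : ℕ} (Q K V : Matrix (Fin d) (Fin d) ℝ)
    (H : Matrix (Fin d) (Fin l) ℝ) (a : Fin d) (i : Fin l) :
    attnHead Q K V H a i = ∑ j, relu ((Q *ᵥ Hᵀ i) ⬝ᵥ (K *ᵥ Hᵀ j)) * (V *ᵥ Hᵀ j) a :=
  rfl

lemma abs_attnHead_sub_attnHead_le {d l : ℕ} {Q K V : Matrix (Fin d) (Fin d) ℝ}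
    {H H' : Matrix (Fin d) (Fin l) ℝ} {κ M ρ : ℝ}
    (hQ : ∀ a b, |Q a b| ≤ κ) (hK : ∀ a b, |K a b| ≤ κ) (hV : ∀ a b, |V a b| ≤ κ)
    (hH : ∀ a i, |H a i| ≤ M) (hH' : ∀ a i, |H' a i| ≤ M)
    (hHH' : ∀ a i, |H a i - H' a i| ≤ ρ) (a : Fin d) (i : Fin l) :
    |attnHead Q K V H a i - attnHead Q K V H' a i| ≤ l * (3 * d ^ 4 * κ ^ 3 * M ^ 2 * ρ) := by
  rw [attnHead_apply, attnHead_apply]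
  convert abs_sum_sub_sum_le_card_mul fun j (_ : j ∈ univ) => ?_ using 3
  · exact (card_fin l).symm
  have hscore_sub := abs_dotProduct_sub_dotProduct_le (abs_mulVec_le hQ (fun c => hH' c i))
    (abs_mulVec_le hK (fun c => hH c j)) (abs_mulVec_sub_mulVec_le hQ (fun c => hHH' c i))
    (abs_mulVec_sub_mulVec_le hK (fun c => hHH' c j))
  have hscore_abs := abs_dotProduct_le (abs_mulVec_le hQ (fun c => hH' c i))
    (abs_mulVec_le hK (fun c => hH' c j))
  calc _ ≤ _ := abs_mul_sub_mul_le ((abs_relu_le _).trans hscore_abs)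
        (abs_mulVec_le hV (fun c => hH c j) a) ((abs_relu_sub_relu_le _ _).trans hscore_sub)
        (abs_mulVec_sub_mulVec_le hV (fun c => hHH' c j) a)
    _ = 3 * d ^ 4 * κ ^ 3 * M ^ 2 * ρ := by simp only [Fintype.card_fin]; ring

theorem mha_input_lipschitz_general
    (d l m : ℕ) (hd : 1 ≤ d) (M κ ρ : ℝ)
    (hκ : 1 ≤ κ) (hρ : 0 ≤ ρ)
    (Q K V : ℕ → Matrix (Fin d) (Fin d) ℝ)
    (hQ : ∀ j < m, ∀ a b, |Q j a b| ≤ κ) (hK : ∀ j < m, ∀ a b, |K j a b| ≤ κ)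
    (hV : ∀ j < m, ∀ a b, |V j a b| ≤ κ)
    (H H' : Matrix (Fin d) (Fin l) ℝ)
    (hH : ∀ a i, |H a i| ≤ M) (hH' : ∀ a i, |H' a i| ≤ M)
    (hHH' : ∀ a i, |H a i - H' a i| ≤ ρ) :
    ∀ a i, |mha m Q K V H a i - mha m Q K V H' a i| ≤
      4 * (d : ℝ) ^ 6 * κ ^ 3 * M ^ 2 * m * l * ρ := by
  intro a i
  simp only [mha, Matrix.sum_apply]
  have hd46 : (d : ℝ) ^ 4 ≤ (d : ℝ) ^ 6 := pow_le_pow_right₀ (by exact_mod_cast hd) (by norm_num)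
  have hrest_nonneg : 0 ≤ κ ^ 3 * M ^ 2 * m * l * ρ := by
    have := zero_le_one.trans hκ; positivity
  calc _ ≤ #(range m) * (l * (3 * d ^ 4 * κ ^ 3 * M ^ 2 * ρ)) :=
        abs_sum_sub_sum_le_card_mul fun j hj =>
          abs_attnHead_sub_attnHead_le (hQ j (mem_range.1 hj)) (hK j (mem_range.1 hj))
            (hV j (mem_range.1 hj)) hH hH' hHH' a i
    _ = 3 * (d : ℝ) ^ 4 * (κ ^ 3 * M ^ 2 * m * l * ρ) := by rw [card_range]; ring
    _ ≤ 4 * (d : ℝ) ^ 6 * (κ ^ 3 * M ^ 2 * m * l * ρ) := by gcongr; norm_num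
    _ = 4 * (d : ℝ) ^ 6 * κ ^ 3 * M ^ 2 * m * l * ρ := by ring

/-- Input-Lipschitz bound for a multi-headed attention layer. -/
theorem mha_input_lipschitz
    (d l m : ℕ) (hd : 1 ≤ d) (hl : 1 ≤ l) (hm : 1 ≤ m) (M κ ρ : ℝ)
    (hM : 1 ≤ M) (hκ : 1 ≤ κ) (hρ : 0 ≤ ρ)
    (Q K V : ℕ → Matrix (Fin d) (Fin d) ℝ)
    (hQ : ∀ j < m, ∀ a b, |Q j a b| ≤ κ) (hK : ∀ j < m, ∀ a b, |K j a b| ≤ κ)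
    (hV : ∀ j < m, ∀ a b, |V j a b| ≤ κ)
    (H H' : Matrix (Fin d) (Fin l) ℝ)
    (hH : ∀ a i, |H a i| ≤ M) (hH' : ∀ a i, |H' a i| ≤ M)
    (hHH' : ∀ a i, |H a i - H' a i| ≤ ρ) :
    ∀ a i, |mha m Q K V H a i - mha m Q K V H' a i| ≤
      4 * (d : ℝ) ^ 6 * κ ^ 3 * M ^ 2 * m * l * ρ :=
  mha_input_lipschitz_general d l m hd M κ ρ hκ hρ Q K V hQ hK hV H H' hH hH' hHH'

end
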